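/- arXiv:2507.05398 — 5 statements merged into one kernel-verified Lean document; each statement's English description precedes it below -/
import Mathlib

section
/- Let H be a complex Hilbert space and A a positive bounded linear operator on H, inducing the semi-inner product ⟨x,y⟩_A = ⟨Ax,y⟩ and semi-norm ‖x‖_A = √⟨x,x⟩_A. Then for all x, y, z ∈ H with ‖z‖_A = 1, one has |⟨x,z⟩_A · ⟨z,y⟩_A| ≤ (1/2)(‖x‖_A ‖y‖_A + |⟨x,y⟩_A|). -/
/-!
Factor the positive operator as `A = B† B`; then `⟪x, y⟫_A = ⟪B x, B y⟫`, and `‖x‖_A = ‖B x‖`,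
so the claim is Buzano's inequality in `H` for the vectors `B x`, `B y` and the unit vector `B z`.
Buzano's inequality: the reflection `w = 2⟪e, v⟫ e - v` of `v` in the line through `e` has
`‖w‖ = ‖v‖` and `⟪u, w⟫ + ⟪u, v⟫ = 2⟪u, e⟫⟪e, v⟫`; apply Cauchy–Schwarz to `⟪u, w⟫`.
-/

open scoped InnerProductSpace

variable {H : Type*} [NormedAddCommGroup H] [InnerProductSpace ℂ H] [CompleteSpace H]

/-- The `A`-semi-inner product `⟪x, y⟫_A = ⟪A x, y⟫`. -/
noncomputable def ipA (A : H →L[ℂ] H) (x y : H) : ℂ := ⟪A x, y⟫_ℂ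

/-- The `A`-semi-norm `‖x‖_A = √(re ⟪A x, x⟫)`. -/
noncomputable def nA (A : H →L[ℂ] H) (x : H) : ℝ := Real.sqrt (ipA A x x).re

section Buzano

variable {𝕜 E : Type*} [RCLike 𝕜] [SeminormedAddCommGroup E] [InnerProductSpace 𝕜 E]

lemma norm_two_inner_smul_sub_eq_norm {e : E} (he : ‖e‖ = 1) (v : E) :
    ‖(2 * ⟪e, v⟫_𝕜) • e - v‖ = ‖v‖ := by
  have hre : RCLike.re ⟪(2 * ⟪e, v⟫_𝕜) • e, v⟫_𝕜 = 2 * ‖⟪e, v⟫_𝕜‖ ^ 2 := by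
    rw [inner_smul_left, map_mul (starRingEnd 𝕜), mul_assoc, RCLike.conj_mul, map_ofNat,
      ← RCLike.ofReal_pow, ← RCLike.ofReal_ofNat, ← RCLike.ofReal_mul, RCLike.ofReal_re]
  have hsq : ‖(2 * ⟪e, v⟫_𝕜) • e - v‖ ^ 2 = ‖v‖ ^ 2 := by
    rw [norm_sub_sq (𝕜 := 𝕜), hre, norm_smul, he, norm_mul, RCLike.norm_two]
    ring
  exact (pow_left_inj₀ (norm_nonneg _) (norm_nonneg _) two_ne_zero).mp hsq

theorem norm_inner_mul_inner_le_of_norm_eq_one (u v : E) {e : E} (he : ‖e‖ = 1) :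
    ‖⟪u, e⟫_𝕜 * ⟪e, v⟫_𝕜‖ ≤ (1 / 2) * (‖u‖ * ‖v‖ + ‖⟪u, v⟫_𝕜‖) := by
  set w := (2 * ⟪e, v⟫_𝕜) • e - v
  have hw : ⟪u, w⟫_𝕜 + ⟪u, v⟫_𝕜 = 2 * (⟪u, e⟫_𝕜 * ⟪e, v⟫_𝕜) := by
    rw [inner_sub_right, inner_smul_right]
    ring
  have : 2 * ‖⟪u, e⟫_𝕜 * ⟪e, v⟫_𝕜‖ ≤ ‖u‖ * ‖v‖ + ‖⟪u, v⟫_𝕜‖ :=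
    calc 2 * ‖⟪u, e⟫_𝕜 * ⟪e, v⟫_𝕜‖ = ‖⟪u, w⟫_𝕜 + ⟪u, v⟫_𝕜‖ := by
          rw [hw, norm_mul 2, RCLike.norm_two]
      _ ≤ ‖⟪u, w⟫_𝕜‖ + ‖⟪u, v⟫_𝕜‖ := norm_add_le _ _
      _ ≤ ‖u‖ * ‖w‖ + ‖⟪u, v⟫_𝕜‖ := by gcongr; exact norm_inner_le_norm u w
      _ = ‖u‖ * ‖v‖ + ‖⟪u, v⟫_𝕜‖ := by rw [norm_two_inner_smul_sub_eq_norm he]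
  linarith

end Buzano

lemma ContinuousLinearMap.IsPositive.exists_ipA_eq_inner {A : H →L[ℂ] H} (hA : A.IsPositive) :
    ∃ B : H →L[ℂ] H, ∀ a b, ipA A a b = ⟪B a, B b⟫_ℂ := by
  obtain ⟨B, rfl⟩ := CStarAlgebra.nonneg_iff_eq_star_mul_self.mp
    ((ContinuousLinearMap.nonneg_iff_isPositive A).mpr hA)
  refine ⟨B, fun a b => ?_⟩
  rw [ipA, ContinuousLinearMap.star_eq_adjoint]
  exact B.adjoint_inner_left b (B a)

omit [CompleteSpace H] in
lemma nA_eq_norm_of_ipA_eq_inner {A B : H →L[ℂ] H} (hB : ∀ a b, ipA A a b = ⟪B a, B b⟫_ℂ)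
    (a : H) : nA A a = ‖B a‖ := by
  rw [nA, hB, ← RCLike.re_eq_complex_re, inner_self_eq_norm_sq, Real.sqrt_sq (norm_nonneg _)]

theorem stmt0 (A : H →L[ℂ] H) (hA : A.IsPositive) (x y z : H) (hz : nA A z = 1) :
    ‖ipA A x z * ipA A z y‖ ≤
      (1 / 2) * (nA A x * nA A y + ‖ipA A x y‖) := by
  obtain ⟨B, hB⟩ := hA.exists_ipA_eq_inner
  have hnorm := nA_eq_norm_of_ipA_eq_inner hB
  rw [hnorm] at hz
  rw [hB, hB, hB, hnorm, hnorm]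
  exact norm_inner_mul_inner_le_of_norm_eq_one (B x) (B y) hz
end

section
/- Let H be a complex Hilbert space with positive bounded operator A. For all a, b, e ∈ H with ‖e‖_A = 1, all α ∈ [0,1] and β ≥ 0, one has |⟨a,e⟩_A ⟨e,b⟩_A|² ≤ (1/4)[ ((2β+1)(1+α²)+2α)/(1+β) · ‖a‖_A² ‖b‖_A² + ((1−α)(2+(1+α)(1+2β)))/(1+β) · ‖a‖_A ‖b‖_A |⟨a,b⟩_A| ]. -/
open scoped InnerProductSpace

variable {H : Type*} [NormedAddCommGroup H] [InnerProductSpace ℂ H] [CompleteSpace H]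

/-!
Since `⟪x, y⟫_A = ⟪√A x, √A y⟫`, it suffices to work in a genuine inner product space. There,
reflecting `x` in the line through the unit vector `f` gives Buzano's inequality
`|⟪x, f⟫⟪f, y⟫| ≤ (‖x‖‖y‖ + |⟪x, y⟫|) / 2`; interpolating it with Cauchy–Schwarz gives the
`α`-weighted bound. Squaring that bound produces a `|⟪x, y⟫|²` term, which the `β`-refinement
`(1 + β)|⟪x, y⟫|² ≤ β‖x‖²‖y‖² + ‖x‖‖y‖|⟪x, y⟫|` of Cauchy–Schwarz turns into the stated form.
-/

section InnerProductSpace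

variable {𝕜 E : Type*} [RCLike 𝕜] [NormedAddCommGroup E] [InnerProductSpace 𝕜 E]

local notation "⟪" x ", " y "⟫" => inner 𝕜 x y

theorem inner_reflection_span_unit_left {f : E} (hf : ‖f‖ = 1) (x y : E) :
    ⟪(𝕜 ∙ f).reflection x, y⟫ = 2 * (⟪x, f⟫ * ⟪f, y⟫) - ⟪x, y⟫ := by
  rw [Submodule.reflection_apply, Submodule.starProjection_unit_singleton 𝕜 hf, inner_sub_left,
    two_smul, inner_add_left, inner_smul_left, inner_conj_symm]
  ring

theorem norm_inner_mul_inner_le_of_norm_eq_one_s4 {f : E} (hf : ‖f‖ = 1) (x y : E) :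
    ‖⟪x, f⟫ * ⟪f, y⟫‖ ≤ (‖x‖ * ‖y‖ + ‖⟪x, y⟫‖) / 2 := by
  have h := norm_inner_le_norm (𝕜 := 𝕜) ((𝕜 ∙ f).reflection x) y
  rw [inner_reflection_span_unit_left hf, LinearIsometryEquiv.norm_map] at h
  have h2 : 2 * ‖⟪x, f⟫ * ⟪f, y⟫‖ ≤ ‖2 * (⟪x, f⟫ * ⟪f, y⟫) - ⟪x, y⟫‖ + ‖⟪x, y⟫‖ := by
    simpa [norm_mul] using norm_le_norm_sub_add (2 * (⟪x, f⟫ * ⟪f, y⟫)) ⟪x, y⟫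
  linarith

theorem norm_inner_mul_inner_le_weighted {f : E} (hf : ‖f‖ = 1) (x y : E) {α : ℝ}
    (hα : α ∈ Set.Icc (0 : ℝ) 1) :
    ‖⟪x, f⟫ * ⟪f, y⟫‖ ≤ (1 + α) / 2 * (‖x‖ * ‖y‖) + (1 - α) / 2 * ‖⟪x, y⟫‖ := by
  have hcs : ‖⟪x, f⟫ * ⟪f, y⟫‖ ≤ ‖x‖ * ‖y‖ := by
    rw [norm_mul]
    calc ‖⟪x, f⟫‖ * ‖⟪f, y⟫‖ ≤ (‖x‖ * ‖f‖) * (‖f‖ * ‖y‖) := by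
          gcongr <;> exact norm_inner_le_norm (𝕜 := 𝕜) _ _
      _ = ‖x‖ * ‖y‖ := by rw [hf]; ring
  have := norm_inner_mul_inner_le_of_norm_eq_one_s4 (𝕜 := 𝕜) hf x y
  nlinarith [hα.1, hα.2]

theorem one_add_mul_norm_inner_sq_le (x y : E) {β : ℝ} (hβ : 0 ≤ β) :
    (1 + β) * ‖⟪x, y⟫‖ ^ 2 ≤ β * (‖x‖ * ‖y‖) ^ 2 + ‖x‖ * ‖y‖ * ‖⟪x, y⟫‖ := by
  have hcs := norm_inner_le_norm (𝕜 := 𝕜) x y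
  have h0 := norm_nonneg ⟪x, y⟫
  nlinarith [mul_le_mul hcs hcs h0 (h0.trans hcs)]

theorem norm_inner_mul_inner_sq_le {f : E} (hf : ‖f‖ = 1) (x y : E) {α β : ℝ}
    (hα : α ∈ Set.Icc (0 : ℝ) 1) (hβ : 0 ≤ β) :
    ‖⟪x, f⟫ * ⟪f, y⟫‖ ^ 2 ≤
      (1 / 4) * (((2 * β + 1) * (1 + α ^ 2) + 2 * α) / (1 + β) * (‖x‖ ^ 2 * ‖y‖ ^ 2) +
        ((1 - α) * (2 + (1 + α) * (1 + 2 * β))) / (1 + β) * (‖x‖ * ‖y‖ * ‖⟪x, y⟫‖)) := by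
  have hweighted := norm_inner_mul_inner_le_weighted (𝕜 := 𝕜) hf x y hα
  have hrefined := one_add_mul_norm_inner_sq_le (𝕜 := 𝕜) x y hβ
  set N := ‖x‖ * ‖y‖
  set T := ‖⟪x, y⟫‖
  have hsq := pow_le_pow_left₀ (norm_nonneg _) hweighted 2
  have hβ' : 0 < 1 + β := by linarith
  calc ‖⟪x, f⟫ * ⟪f, y⟫‖ ^ 2
      ≤ ((1 + α) / 2 * N + (1 - α) / 2 * T) ^ 2 +
          (1 - α) ^ 2 / (4 * (1 + β)) * (β * N ^ 2 + N * T - (1 + β) * T ^ 2) := by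
        have : 0 ≤ (1 - α) ^ 2 / (4 * (1 + β)) * (β * N ^ 2 + N * T - (1 + β) * T ^ 2) := by
          apply mul_nonneg (by positivity); linarith
        linarith
    _ = _ := by
        simp only [N, mul_pow]
        field_simp
        ring

end InnerProductSpace

theorem ipA_eq_inner_sqrt {A : H →L[ℂ] H} (hA : A.IsPositive) (x y : H) :
    ipA A x y = ⟪CFC.sqrt A x, CFC.sqrt A y⟫_ℂ := by
  set S := CFC.sqrt A
  have hS : IsSelfAdjoint S := .of_nonneg (CFC.sqrt_nonneg A)
  have hSS : S * S = A := CFC.sqrt_mul_sqrt_self A (A.nonneg_iff_isPositive.mpr hA)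
  rw [ipA, ← ContinuousLinearMap.adjoint_inner_left, hS.adjoint_eq, ← hSS]
  rfl

theorem nA_eq_norm_sqrt {A : H →L[ℂ] H} (hA : A.IsPositive) (x : H) :
    nA A x = ‖CFC.sqrt A x‖ := by
  rw [nA, ipA_eq_inner_sqrt hA, ← RCLike.re_eq_complex_re, inner_self_eq_norm_sq,
    Real.sqrt_sq (norm_nonneg _)]

theorem stmt4 (A : H →L[ℂ] H) (hA : A.IsPositive) (a b e : H) (he : nA A e = 1)
    (α β : ℝ) (hα : α ∈ Set.Icc (0 : ℝ) 1) (hβ : 0 ≤ β) :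
    ‖ipA A a e * ipA A e b‖ ^ 2 ≤
      (1 / 4) * (((2 * β + 1) * (1 + α ^ 2) + 2 * α) / (1 + β) * (nA A a ^ 2 * nA A b ^ 2) +
        ((1 - α) * (2 + (1 + α) * (1 + 2 * β))) / (1 + β) *
          (nA A a * nA A b * ‖ipA A a b‖)) := by
  simp only [ipA_eq_inner_sqrt hA, nA_eq_norm_sqrt hA] at he ⊢
  exact norm_inner_mul_inner_sq_le he _ _ hα hβ
end

section
/- Let H be a complex Hilbert space with positive bounded operator A. For all a, b, e ∈ H with ‖e‖_A = 1, all α ∈ [0,1], β ≥ 0 and real r ≥ 1, one has |⟨a,e⟩_A ⟨e,b⟩_A|^{2r} ≤ ((1+α+2β)/(2(1+β))) ‖a‖_A^{2r} ‖b‖_A^{2r} + ((1−α)/(2(1+β))) |⟨a,b⟩_A|^{2r}. -/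
/-!
Writing `⟪x, y⟫_A = ⟪A^{1/2} x, A^{1/2} y⟫` reduces everything to a genuine inner product space.
There Buzano's inequality `2 |⟪a, e⟫⟪e, b⟫| ≤ ‖a‖ ‖b‖ + |⟪a, b⟫|` (Cauchy–Schwarz for `a` against
the reflection `2 ⟪e, b⟫ e - b` of `b`, which has the norm of `b`) and the convexity of `t ↦ t ^ p`
give `|⟪a, e⟫⟪e, b⟫| ^ p ≤ (‖a‖ ^ p ‖b‖ ^ p + |⟪a, b⟫| ^ p) / 2`. As `|⟪a, b⟫| ≤ ‖a‖ ‖b‖`, weight may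
then be moved from `|⟪a, b⟫| ^ p` to `‖a‖ ^ p ‖b‖ ^ p`, and the coefficients of the theorem arise
this way: `(1 + α + 2β) / (2 (1 + β)) ≥ 1 / 2`.
-/

open scoped InnerProductSpace

variable {H : Type*} [NormedAddCommGroup H] [InnerProductSpace ℂ H] [CompleteSpace H]

theorem Real.rpow_le_weighted_of_two_mul_le_add {P M N p s : ℝ} (hP : 0 ≤ P) (hM : 0 ≤ M)
    (hMN : M ≤ N) (hPNM : 2 * P ≤ N + M) (hp : 1 ≤ p) (hs : 1 / 2 ≤ s) :
    P ^ p ≤ s * N ^ p + (1 - s) * M ^ p := by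
  have hN : 0 ≤ N := hM.trans hMN
  have hmid : P ^ p ≤ ((1 / 2 : ℝ) * N + 1 / 2 * M) ^ p :=
    Real.rpow_le_rpow hP (by linarith) (by linarith)
  have hconvex : ((1 / 2 : ℝ) * N + 1 / 2 * M) ^ p ≤ 1 / 2 * N ^ p + 1 / 2 * M ^ p :=
    (convexOn_rpow hp).2 hN hM (by norm_num) (by norm_num) (by norm_num)
  have hpow : M ^ p ≤ N ^ p := Real.rpow_le_rpow hM hMN (by linarith)
  nlinarith

section InnerProductSpace

variable {𝕜 E : Type*} [RCLike 𝕜] [NormedAddCommGroup E] [InnerProductSpace 𝕜 E]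

theorem norm_two_mul_inner_smul_sub_of_norm_eq_one {e : E} (he : ‖e‖ = 1) (y : E) :
    ‖(2 * ⟪e, y⟫_𝕜) • e - y‖ = ‖y‖ := by
  have hee : ⟪e, e⟫_𝕜 = 1 := by simp [inner_self_eq_norm_sq_to_K, he]
  have hye : ⟪y, e⟫_𝕜 = (starRingEnd 𝕜) ⟪e, y⟫_𝕜 := (inner_conj_symm y e).symm
  rw [← sq_eq_sq₀ (norm_nonneg _) (norm_nonneg _), ← RCLike.ofReal_inj (K := 𝕜)]
  push_cast
  rw [← inner_self_eq_norm_sq_to_K, ← inner_self_eq_norm_sq_to_K]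
  simp only [inner_sub_left, inner_sub_right, inner_smul_left, inner_smul_right, hee, hye,
    map_mul, map_ofNat]
  ring

theorem norm_two_mul_inner_mul_inner_sub_inner_le {e : E} (he : ‖e‖ = 1) (a b : E) :
    ‖2 * (⟪a, e⟫_𝕜 * ⟪e, b⟫_𝕜) - ⟪a, b⟫_𝕜‖ ≤ ‖a‖ * ‖b‖ :=
  calc ‖2 * (⟪a, e⟫_𝕜 * ⟪e, b⟫_𝕜) - ⟪a, b⟫_𝕜‖ = ‖⟪a, (2 * ⟪e, b⟫_𝕜) • e - b⟫_𝕜‖ := by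
        rw [inner_sub_right, inner_smul_right]; ring_nf
    _ ≤ ‖a‖ * ‖(2 * ⟪e, b⟫_𝕜) • e - b‖ := norm_inner_le_norm _ _
    _ = ‖a‖ * ‖b‖ := by rw [norm_two_mul_inner_smul_sub_of_norm_eq_one he b]

theorem two_mul_norm_inner_mul_inner_le {e : E} (he : ‖e‖ = 1) (a b : E) :
    2 * ‖⟪a, e⟫_𝕜 * ⟪e, b⟫_𝕜‖ ≤ ‖a‖ * ‖b‖ + ‖⟪a, b⟫_𝕜‖ := by
  have h := norm_sub_norm_le (2 * (⟪a, e⟫_𝕜 * ⟪e, b⟫_𝕜)) ⟪a, b⟫_𝕜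
  rw [norm_mul, RCLike.norm_two] at h
  linarith [norm_two_mul_inner_mul_inner_sub_inner_le (𝕜 := 𝕜) he a b]

theorem norm_inner_mul_inner_rpow_le {e : E} (he : ‖e‖ = 1) (a b : E) {p s : ℝ} (hp : 1 ≤ p)
    (hs : 1 / 2 ≤ s) :
    ‖⟪a, e⟫_𝕜 * ⟪e, b⟫_𝕜‖ ^ p ≤ s * (‖a‖ ^ p * ‖b‖ ^ p) + (1 - s) * ‖⟪a, b⟫_𝕜‖ ^ p := by
  rw [← Real.mul_rpow (norm_nonneg a) (norm_nonneg b)]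
  exact Real.rpow_le_weighted_of_two_mul_le_add (norm_nonneg _) (norm_nonneg _)
    (norm_inner_le_norm a b) (two_mul_norm_inner_mul_inner_le he a b) hp hs

end InnerProductSpace

theorem stmt5 (A : H →L[ℂ] H) (hA : A.IsPositive) (a b e : H) (he : nA A e = 1)
    (α β r : ℝ) (hα : α ∈ Set.Icc (0 : ℝ) 1) (hβ : 0 ≤ β) (hr : 1 ≤ r) :
    ‖ipA A a e * ipA A e b‖ ^ (2 * r) ≤
      ((1 + α + 2 * β) / (2 * (1 + β))) * (nA A a ^ (2 * r) * nA A b ^ (2 * r)) +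
        ((1 - α) / (2 * (1 + β))) * ‖ipA A a b‖ ^ (2 * r) := by
  simp only [nA_eq_norm_sqrt hA, ipA_eq_inner_sqrt hA] at he ⊢
  have hden : 0 < 2 * (1 + β) := by linarith
  have hweights : (1 - α) / (2 * (1 + β)) = 1 - (1 + α + 2 * β) / (2 * (1 + β)) := by
    field_simp; ring
  rw [hweights]
  refine norm_inner_mul_inner_rpow_le he _ _ (by linarith) ?_
  rw [le_div_iff₀ hden]
  linarith [hα.1]
end

section
/- Let H be a complex Hilbert space with positive bounded operator A. For all x, y, z ∈ H, one has |⟨x,z⟩_A|² + |⟨y,z⟩_A|² ≤ ‖z‖_A² ( max{‖x‖_A², ‖y‖_A²} + |⟨x,y⟩_A| ). -/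
open scoped InnerProductSpace

variable {H : Type*} [NormedAddCommGroup H] [InnerProductSpace ℂ H] [CompleteSpace H]

/-!
Writing `A = B† B`, the `A`-semi-inner product becomes the inner product of the images under `B`,
so it suffices to prove the inequality in an inner product space. There, for
`u = ⟪x, z⟫ • x + ⟪y, z⟫ • y` one has `⟪u, z⟫ = S := |⟪x, z⟫|² + |⟪y, z⟫|²`, while expanding
`‖u‖²` gives `‖u‖² ≤ S (max ‖x‖² ‖y‖² + |⟪x, y⟫|)`. Cauchy–Schwarz `S ≤ ‖u‖ ‖z‖` then yields
`S² ≤ S ‖z‖² (max ‖x‖² ‖y‖² + |⟪x, y⟫|)`.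
-/

open RCLike ContinuousLinearMap

section InnerProductSpace

variable {𝕜 E : Type*} [RCLike 𝕜] [SeminormedAddCommGroup E] [InnerProductSpace 𝕜 E]

theorem norm_smul_add_smul_sq_le (a b : 𝕜) (x y : E) :
    ‖a • x + b • y‖ ^ 2 ≤ (‖a‖ ^ 2 + ‖b‖ ^ 2) * (max (‖x‖ ^ 2) (‖y‖ ^ 2) + ‖⟪x, y⟫_𝕜‖) := by
  have hcross : re ⟪a • x, b • y⟫_𝕜 ≤ ‖a‖ * ‖b‖ * ‖⟪x, y⟫_𝕜‖ := calc
    re ⟪a • x, b • y⟫_𝕜 ≤ ‖⟪a • x, b • y⟫_𝕜‖ := re_le_norm _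
    _ = ‖a‖ * ‖b‖ * ‖⟪x, y⟫_𝕜‖ := by
      rw [inner_smul_left, inner_smul_right, norm_mul, norm_mul, norm_conj, mul_assoc]
  have hx : ‖x‖ ^ 2 ≤ max (‖x‖ ^ 2) (‖y‖ ^ 2) := le_max_left _ _
  have hy : ‖y‖ ^ 2 ≤ max (‖x‖ ^ 2) (‖y‖ ^ 2) := le_max_right _ _
  rw [@norm_add_sq 𝕜, norm_smul, norm_smul]
  nlinarith [sq_nonneg (‖a‖ - ‖b‖), norm_nonneg ⟪x, y⟫_𝕜, sq_nonneg ‖a‖, sq_nonneg ‖b‖]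

theorem inner_inner_smul_add_inner_smul_left (x y z : E) :
    ⟪⟪x, z⟫_𝕜 • x + ⟪y, z⟫_𝕜 • y, z⟫_𝕜 = ((‖⟪x, z⟫_𝕜‖ ^ 2 + ‖⟪y, z⟫_𝕜‖ ^ 2 : ℝ) : 𝕜) := by
  rw [inner_add_left, inner_smul_left, inner_smul_left, RCLike.conj_mul, RCLike.conj_mul]
  push_cast
  rfl

theorem norm_inner_sq_add_norm_inner_sq_le (x y z : E) :
    ‖⟪x, z⟫_𝕜‖ ^ 2 + ‖⟪y, z⟫_𝕜‖ ^ 2 ≤ ‖z‖ ^ 2 * (max (‖x‖ ^ 2) (‖y‖ ^ 2) + ‖⟪x, y⟫_𝕜‖) := by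
  set S := ‖⟪x, z⟫_𝕜‖ ^ 2 + ‖⟪y, z⟫_𝕜‖ ^ 2
  set K := max (‖x‖ ^ 2) (‖y‖ ^ 2) + ‖⟪x, y⟫_𝕜‖
  set u := ⟪x, z⟫_𝕜 • x + ⟪y, z⟫_𝕜 • y
  have hS : 0 ≤ S := by positivity
  have hK : 0 ≤ K := add_nonneg (le_max_of_le_left (sq_nonneg _)) (norm_nonneg _)
  have hSu : S ≤ ‖u‖ * ‖z‖ := calc
    S = ‖⟪u, z⟫_𝕜‖ := by
      rw [inner_inner_smul_add_inner_smul_left, norm_algebraMap', Real.norm_of_nonneg hS]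
    _ ≤ ‖u‖ * ‖z‖ := norm_inner_le_norm u z
  have key : S * S ≤ S * (‖z‖ ^ 2 * K) := calc
    S * S ≤ ‖u‖ ^ 2 * ‖z‖ ^ 2 := by nlinarith
    _ ≤ S * K * ‖z‖ ^ 2 := by gcongr; exact norm_smul_add_smul_sq_le _ _ x y
    _ = S * (‖z‖ ^ 2 * K) := by ring
  rcases hS.eq_or_lt with h | h
  · rw [← h]
    positivity
  · exact le_of_mul_le_mul_left key h

end InnerProductSpace

theorem ContinuousLinearMap.IsPositive.exists_eq_adjoint_comp_self {A : H →L[ℂ] H}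
    (hA : A.IsPositive) : ∃ B : H →L[ℂ] H, A = adjoint B ∘L B := by
  obtain ⟨B, hB⟩ := CStarAlgebra.nonneg_iff_eq_star_mul_self.mp ((nonneg_iff_isPositive A).mpr hA)
  exact ⟨B, by rw [hB, star_eq_adjoint]; rfl⟩

theorem stmt6 (A : H →L[ℂ] H) (hA : A.IsPositive) (x y z : H) :
    ‖ipA A x z‖ ^ 2 + ‖ipA A y z‖ ^ 2 ≤
      nA A z ^ 2 * (max (nA A x ^ 2) (nA A y ^ 2) + ‖ipA A x y‖) := by
  obtain ⟨B, rfl⟩ := hA.exists_eq_adjoint_comp_self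
  have hip (v w : H) : ipA (adjoint B ∘L B) v w = ⟪B v, B w⟫_ℂ := adjoint_inner_left B w (B v)
  have hn (v : H) : nA (adjoint B ∘L B) v = ‖B v‖ := by
    rw [nA, hip, ← RCLike.re_eq_complex_re, inner_self_eq_norm_sq, Real.sqrt_sq (norm_nonneg _)]
  simp only [hip, hn]
  exact norm_inner_sq_add_norm_inner_sq_le (B x) (B y) (B z)
end

section
/- Let H be a complex Hilbert space, A a positive bounded operator, and T, S bounded operators admitting A-adjoints T^♯, S^♯. Then w_A(S^♯S T^♯T) ≤ (1/2) ‖(T^♯T)² + (S^♯S)²‖_A, where w_A(R) = sup{|⟨Rx,x⟩_A| : ‖x‖_A = 1} and ‖R‖_A = sup{‖Rx‖_A : ‖x‖_A = 1}. -/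
open scoped InnerProductSpace

variable {H : Type*} [NormedAddCommGroup H] [InnerProductSpace ℂ H] [CompleteSpace H]

/-- The `A`-numerical radius. -/
noncomputable def wA (A T : H →L[ℂ] H) : ℝ :=
  sSup {c : ℝ | ∃ x : H, nA A x = 1 ∧ c = ‖ipA A (T x) x‖}

/-- The `A`-operator seminorm. -/
noncomputable def opA (A T : H →L[ℂ] H) : ℝ :=
  sSup {c : ℝ | ∃ x : H, nA A x = 1 ∧ c = nA A (T x)}

/-!
With `P = T^♯T` and `Q = S^♯S`, both `A`-selfadjoint, every `x` with `‖x‖_A = 1` satisfies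
`|⟨QPx, x⟩_A| = |⟨Px, Qx⟩_A| ≤ ‖Px‖_A ‖Qx‖_A ≤ (‖Px‖_A² + ‖Qx‖_A²) / 2 = Re ⟨(P² + Q²)x, x⟩_A / 2
≤ ‖(P² + Q²)x‖_A / 2`. Since `‖·‖_A` of an operator is a supremum, one also needs that an
`A`-selfadjoint `B` is bounded on the `A`-unit sphere; this is the power trick
`‖Bx‖_A ^ 2 ≤ ‖B²x‖_A`, iterated along `B ^ 2 ^ k`.
-/

theorem le_of_forall_pow_two_pow_le_mul {a b C : ℝ} (hb : 0 ≤ b)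
    (h : ∀ k : ℕ, a ^ 2 ^ k ≤ C * b ^ 2 ^ k) : a ≤ b := by
  by_contra! hba
  rcases hb.eq_or_lt with rfl | hb
  · linarith [show a ≤ 0 by simpa using h 0]
  have hr : 1 < a / b := (one_lt_div hb).2 hba
  obtain ⟨k, hk⟩ := pow_unbounded_of_one_lt C hr
  have hle : (a / b) ^ 2 ^ k ≤ C := by
    rw [div_pow, div_le_iff₀ (by positivity)]
    exact h k
  have hmono : (a / b) ^ k ≤ (a / b) ^ 2 ^ k := pow_le_pow_right₀ hr.le Nat.lt_two_pow_self.le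
  linarith

section SemiInner

open ComplexConjugate

variable {E : Type*} [NormedAddCommGroup E] [InnerProductSpace ℂ E] {A B : E →L[ℂ] E}

theorem ipA_conj (hA : A.IsPositive) (x y : E) : conj (ipA A y x) = ipA A x y := by
  rw [ipA, ipA, inner_conj_symm, hA.inner_left_eq_inner_right]

noncomputable abbrev ipACore (hA : A.IsPositive) : PreInnerProductSpace.Core ℂ E where
  inner := ipA A
  conj_inner_symm := ipA_conj hA
  re_inner_nonneg := hA.re_inner_nonneg_left
  add_left x y z := by simp only [ipA, map_add, inner_add_left]
  smul_left x y r := by simp only [ipA, map_smul, inner_smul_left]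

theorem nA_nonneg (A : E →L[ℂ] E) (x : E) : 0 ≤ nA A x := Real.sqrt_nonneg _

theorem nA_sq (hA : A.IsPositive) (x : E) : nA A x ^ 2 = (ipA A x x).re :=
  Real.sq_sqrt (hA.re_inner_nonneg_left x)

theorem norm_ipA_le (hA : A.IsPositive) (x y : E) : ‖ipA A x y‖ ≤ nA A x * nA A y :=
  @InnerProductSpace.Core.norm_inner_le_norm ℂ E _ _ _ (ipACore hA) x y

theorem re_ipA_le_nA (hA : A.IsPositive) {x : E} (hx : nA A x = 1) (y : E) :
    (ipA A y x).re ≤ nA A y :=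
  calc (ipA A y x).re ≤ ‖ipA A y x‖ := Complex.re_le_norm _
    _ ≤ nA A y * nA A x := norm_ipA_le hA y x
    _ = nA A y := by rw [hx, mul_one]

theorem nA_le_sqrt_norm_mul_norm (A : E →L[ℂ] E) (x : E) : nA A x ≤ √‖A‖ * ‖x‖ := by
  have h : (ipA A x x).re ≤ ‖A‖ * ‖x‖ ^ 2 :=
    calc (ipA A x x).re ≤ ‖A x‖ * ‖x‖ := (Complex.re_le_norm _).trans (norm_inner_le_norm _ _)
      _ ≤ ‖A‖ * ‖x‖ * ‖x‖ := by gcongr; exact A.le_opNorm x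
      _ = ‖A‖ * ‖x‖ ^ 2 := by ring
  calc nA A x ≤ √(‖A‖ * ‖x‖ ^ 2) := Real.sqrt_le_sqrt h
    _ = √‖A‖ * ‖x‖ := by rw [Real.sqrt_mul (norm_nonneg A), Real.sqrt_sq (norm_nonneg x)]

theorem opA_nonneg (A B : E →L[ℂ] E) : 0 ≤ opA A B :=
  Real.sSup_nonneg <| by
    rintro _ ⟨x, -, rfl⟩
    exact nA_nonneg A _

def IsASelfAdjoint (A B : E →L[ℂ] E) : Prop :=
  ∀ x y : E, ipA A (B x) y = ipA A x (B y)

theorem isASelfAdjoint_adjoint_comp (hA : A.IsPositive) {T Ts : E →L[ℂ] E}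
    (hadj : ∀ x y : E, ipA A (T x) y = ipA A x (Ts y)) : IsASelfAdjoint A (Ts ∘L T) := by
  intro x y
  calc ipA A (Ts (T x)) y = conj (ipA A y (Ts (T x))) := (ipA_conj hA _ _).symm
    _ = conj (ipA A (T y) (T x)) := by rw [hadj]
    _ = ipA A (T x) (T y) := ipA_conj hA _ _
    _ = ipA A x (Ts (T y)) := hadj _ _

namespace IsASelfAdjoint

theorem pow (hB : IsASelfAdjoint A B) (n : ℕ) : IsASelfAdjoint A (B ^ n) := by
  induction n with
  | zero => exact fun _ _ => rfl
  | succ n ih =>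
    intro x y
    calc ipA A ((B ^ (n + 1)) x) y = ipA A ((B ^ n) (B x)) y := by rw [pow_succ]; rfl
      _ = ipA A x (B ((B ^ n) y)) := by rw [ih, hB]
      _ = ipA A x ((B ^ (n + 1)) y) := by rw [pow_succ']; rfl

theorem comp_self (hB : IsASelfAdjoint A B) : IsASelfAdjoint A (B ∘L B) :=
  fun _ _ => (hB _ _).trans (hB _ _)

theorem add {C : E →L[ℂ] E} (hB : IsASelfAdjoint A B) (hC : IsASelfAdjoint A C) :
    IsASelfAdjoint A (B + C) := by
  intro x y
  simp only [ipA, add_apply, map_add, inner_add_left, inner_add_right]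
  exact congrArg₂ (· + ·) (hB x y) (hC x y)

theorem nA_apply_sq (hA : A.IsPositive) (hB : IsASelfAdjoint A B) (x : E) :
    nA A (B x) ^ 2 = (ipA A ((B ∘L B) x) x).re := by
  rw [nA_sq hA, ContinuousLinearMap.comp_apply, hB (B x) x]

theorem nA_apply_sq_le (hA : A.IsPositive) (hB : IsASelfAdjoint A B) {x : E} (hx : nA A x = 1) :
    nA A (B x) ^ 2 ≤ nA A ((B ^ 2) x) := by
  rw [hB.nA_apply_sq hA, sq B]
  exact re_ipA_le_nA hA hx _

/- `‖x‖_A` does not control `‖x‖`; the constant `√‖A‖ * ‖x‖` of the crude bound on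
`‖B ^ 2 ^ k x‖_A` disappears on taking `2 ^ k`-th roots. -/
theorem nA_apply_le_opNorm (hA : A.IsPositive) (hB : IsASelfAdjoint A B) {x : E}
    (hx : nA A x = 1) : nA A (B x) ≤ ‖B‖ := by
  have hpow : ∀ k : ℕ, nA A (B x) ^ 2 ^ k ≤ nA A ((B ^ 2 ^ k) x) := by
    intro k
    induction k with
    | zero => simp
    | succ k ih =>
      calc nA A (B x) ^ 2 ^ (k + 1) = (nA A (B x) ^ 2 ^ k) ^ 2 := by rw [pow_succ, pow_mul]
        _ ≤ nA A ((B ^ 2 ^ k) x) ^ 2 := pow_le_pow_left₀ (pow_nonneg (nA_nonneg A _) _) ih 2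
        _ ≤ nA A (((B ^ 2 ^ k) ^ 2) x) := (hB.pow _).nA_apply_sq_le hA hx
        _ = nA A ((B ^ 2 ^ (k + 1)) x) := by rw [← pow_mul, pow_succ]
  refine le_of_forall_pow_two_pow_le_mul (C := √‖A‖ * ‖x‖) (norm_nonneg B) fun k => ?_
  calc nA A (B x) ^ 2 ^ k ≤ nA A ((B ^ 2 ^ k) x) := hpow k
    _ ≤ √‖A‖ * ‖(B ^ 2 ^ k) x‖ := nA_le_sqrt_norm_mul_norm A _
    _ ≤ √‖A‖ * (‖B‖ ^ 2 ^ k * ‖x‖) := by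
      gcongr
      exact ((B ^ 2 ^ k).le_opNorm x).trans (by gcongr; exact norm_pow_le' B (by positivity))
    _ = √‖A‖ * ‖x‖ * ‖B‖ ^ 2 ^ k := by ring

theorem nA_apply_le_opA (hA : A.IsPositive) (hB : IsASelfAdjoint A B) {x : E}
    (hx : nA A x = 1) : nA A (B x) ≤ opA A B :=
  le_csSup ⟨‖B‖, by rintro _ ⟨y, hy, rfl⟩; exact hB.nA_apply_le_opNorm hA hy⟩ ⟨x, hx, rfl⟩

end IsASelfAdjoint

theorem norm_ipA_comp_apply_le (hA : A.IsPositive) {P Q : E →L[ℂ] E}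
    (hP : IsASelfAdjoint A P) (hQ : IsASelfAdjoint A Q) {x : E} (hx : nA A x = 1) :
    ‖ipA A ((Q ∘L P) x) x‖ ≤ 1 / 2 * opA A (P ∘L P + Q ∘L Q) := by
  have hsum : nA A (P x) ^ 2 + nA A (Q x) ^ 2 = (ipA A ((P ∘L P + Q ∘L Q) x) x).re := by
    rw [hP.nA_apply_sq hA, hQ.nA_apply_sq hA, ← Complex.add_re, ipA, ipA, ipA,
      add_apply, map_add, inner_add_left]
  calc ‖ipA A ((Q ∘L P) x) x‖ = ‖ipA A (P x) (Q x)‖ := by rw [ContinuousLinearMap.comp_apply, hQ]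
    _ ≤ nA A (P x) * nA A (Q x) := norm_ipA_le hA _ _
    _ ≤ 1 / 2 * (nA A (P x) ^ 2 + nA A (Q x) ^ 2) := by
      nlinarith [sq_nonneg (nA A (P x) - nA A (Q x))]
    _ ≤ 1 / 2 * nA A ((P ∘L P + Q ∘L Q) x) := by
      rw [hsum]; gcongr; exact re_ipA_le_nA hA hx _
    _ ≤ 1 / 2 * opA A (P ∘L P + Q ∘L Q) := by
      gcongr; exact (hP.comp_self.add hQ.comp_self).nA_apply_le_opA hA hx

end SemiInner

theorem stmt11 (A : H →L[ℂ] H) (hA : A.IsPositive) (T Ts S Ss : H →L[ℂ] H)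
    (hadjT : ∀ x y : H, ipA A (T x) y = ipA A x (Ts y))
    (hadjS : ∀ x y : H, ipA A (S x) y = ipA A x (Ss y)) :
    wA A ((Ss ∘L S) ∘L (Ts ∘L T)) ≤
      (1 / 2) * opA A ((Ts ∘L T) ∘L (Ts ∘L T) + (Ss ∘L S) ∘L (Ss ∘L S)) := by
  have hP := isASelfAdjoint_adjoint_comp hA hadjT
  have hQ := isASelfAdjoint_adjoint_comp hA hadjS
  refine Real.sSup_le ?_ (mul_nonneg (by norm_num) (opA_nonneg A _))
  rintro _ ⟨x, hx, rfl⟩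
  exact norm_ipA_comp_apply_le hA hP hQ hx
end
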